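/- arXiv:2205.04398 — 6 statements merged into one kernel-verified Lean document; each statement's English description precedes it below -/
import Mathlib

section
/- The cycle graph C_5 has odd chromatic number exactly 5; that is, every proper colouring of C_5 such that each vertex has some colour appearing an odd number of times in its neighbourhood uses at least 5 colours, and such a colouring with 5 colours exists. -/
open scoped Classical
open Finset

/-- The colouring `c` is *odd at* `v`: some colour appears an odd number of
times in the neighbourhood of `v`. -/
def SimpleGraph.IsOddAt {V α : Type} [Fintype V] (G : SimpleGraph V)
    (c : V → α) (v : V) : Prop :=
  ∃ a : α, Odd ((G.neighborFinset v).filter fun w => c w = a).card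

/-- `c` is a proper odd vertex-colouring of `G`. -/
def SimpleGraph.IsProperOdd {V α : Type} [Fintype V] (G : SimpleGraph V)
    (c : V → α) : Prop :=
  (∀ u w : V, G.Adj u w → c u ≠ c w) ∧
  ∀ v : V, 0 < G.degree v → G.IsOddAt c v

lemma nF_eq {V : Type} [Fintype V] (G : SimpleGraph V) (v : V)
    (i1 i2 : Fintype (G.neighborSet v)) :
    @SimpleGraph.neighborFinset V G v i1 = @SimpleGraph.neighborFinset V G v i2 := by
  ext w
  rw [@SimpleGraph.mem_neighborFinset _ _ _ i1, @SimpleGraph.mem_neighborFinset _ _ _ i2]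

lemma c5_common : ∀ u w : Fin 5, u ≠ w → (SimpleGraph.cycleGraph 5).Adj u w ∨
    ∃ v : Fin 5, (SimpleGraph.cycleGraph 5).neighborFinset v = {u, w} := by
  decide

lemma c5_injective {α : Type} {c : Fin 5 → α}
    (h : (SimpleGraph.cycleGraph 5).IsProperOdd c) : Function.Injective c := by
  intro u w hcw
  by_contra hne
  rcases c5_common u w hne with hadj | ⟨v, hN⟩
  · exact h.1 u w hadj hcw
  · obtain ⟨a, ha⟩ := h.2 v (by
      rw [SimpleGraph.degree, nF_eq _ _ _ (SimpleGraph.neighborSetFintype _ _), hN]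
      simp)
    rw [nF_eq _ _ _ (SimpleGraph.neighborSetFintype _ _), hN] at ha
    have : ({u, w} : Finset (Fin 5)).filter (fun x => c x = a) =
        if c u = a then {u, w} else ∅ := by
      split_ifs with hc
      · apply Finset.filter_true_of_mem
        intro x hx
        rcases Finset.mem_insert.mp hx with rfl | hx
        · exact hc
        · rw [Finset.mem_singleton.mp hx, ← hcw]; exact hc
      · apply Finset.filter_false_of_mem
        intro x hx
        rcases Finset.mem_insert.mp hx with rfl | hx
        · exact hc
        · rw [Finset.mem_singleton.mp hx, ← hcw]; exact hc
    rw [this] at ha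
    split_ifs at ha with hc
    · rw [Finset.card_insert_of_notMem (by simpa using hne), Finset.card_singleton] at ha
      exact (Nat.not_odd_iff_even.mpr (by norm_num)) ha
    · simp [Nat.odd_iff] at ha

lemma c5_exists_aux : ∀ v : Fin 5, ∃ a : Fin 5,
    Odd (((SimpleGraph.cycleGraph 5).neighborFinset v).filter
      (fun w => (id w : Fin 5) = a)).card := by
  decide

/-- The odd chromatic number of `C₅` is exactly `5`. -/
theorem c5_odd_chromatic_number_eq_five :
    (∃ c : Fin 5 → Fin 5, (SimpleGraph.cycleGraph 5).IsProperOdd c) ∧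
    ∀ k : ℕ, (∃ c : Fin 5 → Fin k, (SimpleGraph.cycleGraph 5).IsProperOdd c) → 5 ≤ k := by
  constructor
  · refine ⟨id, fun u w hadj => ?_, fun v _ => ?_⟩
    · intro hc
      exact (SimpleGraph.cycleGraph 5).ne_of_adj hadj hc
    · obtain ⟨a, ha⟩ := c5_exists_aux v
      refine ⟨a, ?_⟩
      rw [nF_eq _ _ _ (SimpleGraph.neighborSetFintype _ _)]
      convert ha using 3
  · rintro k ⟨c, hc⟩
    have := Fintype.card_le_of_injective c (c5_injective hc)
    simpa using this
end

section
/- Let G be a simple graph, v a vertex, and c a colouring of G \ {v} that is a proper odd colouring of G \ {v}. For each neighbour w of v, there is at most one colour b such that extending c by assigning colour b to v makes every colour appear an even number of times in the neighbourhood of w in G. Consequently, at most 2·d(v) colours in total are forbidden at v (by properness or by oddness). -/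
open scoped Classical
open Finset

/-- `G` has a proper odd colouring with at most 9 colours. -/
def SimpleGraph.HasNice {V : Type} [Fintype V] (G : SimpleGraph V) : Prop :=
  ∃ c : V → Fin 9, G.IsProperOdd c

/-- Given a proper odd colouring `c` of `G \ {v}`, each neighbour `w` of `v`
forbids at most one colour at `v` by oddness (a colour whose use at `v` would
make every colour appear an even number of times in `N(w)`), and in total at
most `2·d(v)` colours are forbidden at `v` by properness or oddness. -/
theorem forbidden_colours_bound {V : Type} [Fintype V] [DecidableEq V]
    (G : SimpleGraph V) (v : V) (c : V → ℕ)
    (hproper : ∀ u w : V, u ≠ v → w ≠ v → G.Adj u w → c u ≠ c w)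
    (hodd : ∀ w : V, w ≠ v → ((G.neighborFinset w).erase v).Nonempty →
      ∃ a : ℕ, Odd (((G.neighborFinset w).erase v).filter fun u => c u = a).card) :
    (∀ w ∈ G.neighborSet v,
      {b : ℕ | ∀ a : ℕ, Even ((G.neighborFinset w).filter
          fun u => Function.update c v b u = a).card}.Subsingleton) ∧
    {b : ℕ | (∃ w ∈ G.neighborSet v, c w = b) ∨
        ∃ w ∈ G.neighborSet v, ∀ a : ℕ, Even ((G.neighborFinset w).filter
          fun u => Function.update c v b u = a).card}.ncard ≤ 2 * G.degree v := by
  classical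
  have key : ∀ w ∈ G.neighborSet v,
      {b : ℕ | ∀ a : ℕ, Even ((G.neighborFinset w).filter
          fun u => Function.update c v b u = a).card}.Subsingleton := by
    intro w hw b1 hb1 b2 hb2
    simp only [Set.mem_setOf_eq] at hb1 hb2
    by_contra hne
    have hv : v ∈ G.neighborFinset w := by
      rw [SimpleGraph.mem_neighborFinset]
      exact ((G.mem_neighborSet v w).mp hw).symm
    have hcard : ∀ b a : ℕ, ((G.neighborFinset w).filter
        fun u => Function.update c v b u = a).card =
        (((G.neighborFinset w).erase v).filter fun u => c u = a).card
          + (if b = a then 1 else 0) := by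
      intro b a
      rw [← Finset.insert_erase hv, Finset.filter_insert]
      have hfc : ((G.neighborFinset w).erase v).filter
          (fun u => Function.update c v b u = a) =
          ((G.neighborFinset w).erase v).filter (fun u => c u = a) := by
        apply Finset.filter_congr
        intro u hu
        rw [Function.update_of_ne (Finset.ne_of_mem_erase hu)]
      by_cases h : Function.update c v b v = a
      · rw [if_pos h, Finset.card_insert_of_notMem (by simp), hfc]
        rw [Function.update_self] at h
        simp [h]
      · rw [if_neg h, hfc]
        rw [Function.update_self] at h
        simp [h]
    have h1 := hb1 b1
    have h2 := hb2 b1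
    rw [hcard, if_pos rfl] at h1
    rw [hcard, if_neg (fun h => hne h.symm)] at h2
    obtain ⟨k, hk⟩ := h1
    obtain ⟨l, hl⟩ := h2
    omega
  refine ⟨key, ?_⟩
  set Sw := fun w : V => {b : ℕ | ∀ a : ℕ, Even ((G.neighborFinset w).filter
      fun u => Function.update c v b u = a).card} with hSw
  let pickF : V → Finset ℕ := fun w =>
    if h : ∃ b, b ∈ Sw w then {Classical.choose h} else ∅
  have hpick_card : ∀ w, (pickF w).card ≤ 1 := by
    intro w
    by_cases h : ∃ b, b ∈ Sw w
    · simp [pickF, dif_pos h]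
    · simp [pickF, dif_neg h]
  let F : Finset ℕ := (G.neighborFinset v).image c ∪
    (G.neighborFinset v).biUnion pickF
  have hsub : {b : ℕ | (∃ w ∈ G.neighborSet v, c w = b) ∨
      ∃ w ∈ G.neighborSet v, ∀ a : ℕ, Even ((G.neighborFinset w).filter
        fun u => Function.update c v b u = a).card} ⊆ ↑F := by
    intro b hb
    simp only [Set.mem_setOf_eq] at hb
    rw [Finset.mem_coe, Finset.mem_union]
    rcases hb with ⟨w, hw, hcw⟩ | ⟨w, hw, hall⟩
    · left
      exact Finset.mem_image.mpr ⟨w, by rwa [SimpleGraph.mem_neighborFinset], hcw⟩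
    · right
      rw [Finset.mem_biUnion]
      refine ⟨w, by rwa [SimpleGraph.mem_neighborFinset], ?_⟩
      have hb' : b ∈ Sw w := hall
      have hex : ∃ x, x ∈ Sw w := ⟨b, hb'⟩
      simp only [pickF, dif_pos hex, Finset.mem_singleton]
      exact key w hw hb' (Classical.choose_spec hex)
  calc {b : ℕ | (∃ w ∈ G.neighborSet v, c w = b) ∨
      ∃ w ∈ G.neighborSet v, ∀ a : ℕ, Even ((G.neighborFinset w).filter
        fun u => Function.update c v b u = a).card}.ncard
      ≤ (↑F : Set ℕ).ncard := Set.ncard_le_ncard hsub F.finite_toSet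
    _ = F.card := Set.ncard_coe_finset F
    _ ≤ ((G.neighborFinset v).image c).card
          + ((G.neighborFinset v).biUnion pickF).card := Finset.card_union_le _ _
    _ ≤ G.degree v + G.degree v := by
        refine Nat.add_le_add ?_ ?_
        · exact (Finset.card_image_le).trans_eq (G.card_neighborFinset_eq_degree v)
        · refine (Finset.card_biUnion_le).trans ?_
          calc ∑ w ∈ G.neighborFinset v, (pickF w).card
              ≤ ∑ _w ∈ G.neighborFinset v, 1 :=
                Finset.sum_le_sum fun w _ => hpick_card w
            _ = G.degree v := by simp [G.card_neighborFinset_eq_degree v]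
    _ = 2 * G.degree v := by ring
end

section
/- Let G be a toroidal graph with minimum counterexample property: G has no proper odd colouring with at most 9 colours, but every toroidal graph with fewer vertices does. Then G has no vertex of degree 1 or 3. -/
open scoped Classical
open Finset

/-
Delete a vertex `v` of odd degree at most 3 and colour `G - v` by minimality. Every neighbour `u`
of `v` with a neighbour in `G - v` has an odd colour there; give `v` a colour avoiding the colours
and these odd colours of its at most 3 neighbours (at most 6 of the 9 colours). Then the colouring
stays proper, each such `u` keeps its odd colour, a neighbour whose only neighbour is `v` sees
the colour of `v` once, and `v` itself sees an odd colour because its odd degree is a sum over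
colour classes.
-/

namespace SimpleGraph

open Function

variable {V α : Type} [Fintype V] {G : SimpleGraph V} {v : V}

theorem isOddAt_of_odd_degree (c : V → α) (h : Odd (G.degree v)) : G.IsOddAt c v := by
  by_contra hc
  simp only [IsOddAt, not_exists, Nat.not_odd_iff_even] at hc
  rw [← card_neighborFinset_eq_degree, card_eq_sum_card_image c] at h
  exact Nat.not_even_iff_odd.2 h (Finset.even_sum _ fun a _ => hc a)

theorem map_neighborFinset_induce_ne (u : {x // x ≠ v}) :
    ((G.induce {x | x ≠ v}).neighborFinset u).map (.subtype _) =
      (G.neighborFinset u).erase v := by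
  ext; simp [and_comm]

theorem card_filter_neighborFinset_induce_ne (c : V → α) (u : {x // x ≠ v}) {a : α}
    (ha : G.Adj u v → c v ≠ a) :
    #{w ∈ (G.induce {x | x ≠ v}).neighborFinset u | c w.1 = a} =
      #{w ∈ G.neighborFinset u | c w = a} := by
  have hv : v ∉ {w ∈ G.neighborFinset u | c w = a} := fun hv =>
    ha ((mem_neighborFinset _ _ _).1 (mem_filter.1 hv).1) (mem_filter.1 hv).2
  rw [← erase_eq_of_notMem hv, ← filter_erase, ← map_neighborFinset_induce_ne, filter_map,
    card_map]
  rfl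

theorem isOddAt_of_induce_ne {c : V → α} {u : {x // x ≠ v}} (hdeg : 0 < G.degree u) {a : α}
    (ha : 0 < (G.induce {x | x ≠ v}).degree u →
      Odd #{w ∈ (G.induce {x | x ≠ v}).neighborFinset u | c w.1 = a})
    (hav : G.Adj u v → c v ≠ a) : G.IsOddAt c u := by
  rcases Nat.eq_zero_or_pos ((G.induce {x | x ≠ v}).degree u) with h0 | hpos
  · have hN : G.neighborFinset u = {v} := by
      rw [← card_neighborFinset_eq_degree, card_eq_zero, ← map_eq_empty,
        map_neighborFinset_induce_ne, erase_eq_empty_iff] at h0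
      exact h0.resolve_left (card_pos.1 (by rwa [card_neighborFinset_eq_degree])).ne_empty
    exact ⟨c v, by simp [hN, filter_singleton]⟩
  · exact ⟨a, card_filter_neighborFinset_induce_ne c u hav ▸ ha hpos⟩

theorem exists_isProperOdd_update [Fintype α] {c : V → α}
    (hc : (G.induce {x | x ≠ v}).IsProperOdd fun x => c x) (hodd : Odd (G.degree v))
    (hcard : 2 * G.degree v < Fintype.card α) : ∃ b, G.IsProperOdd (update c v b) := by
  have hoddCol : ∀ u : {x // x ≠ v}, ∃ a, 0 < (G.induce {x | x ≠ v}).degree u →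
      Odd #{w ∈ (G.induce {x | x ≠ v}).neighborFinset u | c w.1 = a} := fun u => by
    by_cases h : 0 < (G.induce {x | x ≠ v}).degree u
    · exact (hc.2 u h).imp fun _ ha _ => ha
    · exact ⟨c u, fun h' => absurd h' h⟩
  choose o ho using hoddCol
  set S := (G.neighborFinset v).image c ∪ ((G.neighborFinset v).subtype (· ≠ v)).image o
  have hS : #S < #(univ : Finset α) := calc
    #S ≤ G.degree v + G.degree v := by
      rw [← card_neighborFinset_eq_degree]
      exact card_union_le _ _ |>.trans <| add_le_add card_image_le <|
        card_image_le.trans ((card_subtype _ _).trans_le (card_filter_le _ _))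
    _ < #(univ : Finset α) := by rw [card_univ]; omega
  obtain ⟨b, -, hb⟩ := exists_mem_notMem_of_card_lt_card hS
  have hcv : ∀ u, G.Adj v u → update c v b u ≠ update c v b v := by
    intro u hu
    rw [update_self, update_of_ne hu.ne']
    exact fun h =>
      hb (mem_union_left _ (h ▸ mem_image_of_mem c ((mem_neighborFinset _ _ _).2 hu)))
  have hres (u : {x // x ≠ v}) : update c v b u = c u := update_of_ne u.2 _ _
  refine ⟨b, fun x y hxy => ?_, fun u hu => ?_⟩
  · rcases eq_or_ne x v with rfl | hx
    · exact (hcv y hxy).symm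
    rcases eq_or_ne y v with rfl | hy
    · exact hcv x hxy.symm
    simpa only [hres ⟨x, hx⟩, hres ⟨y, hy⟩] using hc.1 ⟨x, hx⟩ ⟨y, hy⟩ hxy
  rcases eq_or_ne u v with rfl | hu'
  · exact isOddAt_of_odd_degree _ hodd
  refine isOddAt_of_induce_ne (u := ⟨u, hu'⟩) hu (a := o ⟨u, hu'⟩)
    (fun h => by simpa only [hres] using ho _ h) fun hadj => ?_
  rw [update_self]
  rintro rfl
  exact hb (mem_union_right _
    (mem_image_of_mem o (mem_subtype.2 ((mem_neighborFinset _ _ _).2 hadj.symm))))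

theorem hasNice_of_hasNice_induce_ne (hodd : Odd (G.degree v)) (hle : G.degree v ≤ 3)
    (hH : (G.induce {x | x ≠ v}).HasNice) : G.HasNice := by
  obtain ⟨c₀, hc₀⟩ := hH
  have hc : (fun x : {x // x ≠ v} => extend Subtype.val c₀ 0 x) = c₀ :=
    funext (Subtype.val_injective.extend_apply c₀ 0)
  obtain ⟨b, hb⟩ :=
    exists_isProperOdd_update (hc ▸ hc₀) hodd (by simp only [Fintype.card_fin]; omega)
  exact ⟨_, hb⟩

end SimpleGraph

/-- A minimal toroidal counterexample (no nice colouring, but every toroidal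
graph on fewer vertices has one) has no vertex of degree 1 or 3. Toroidality
is an abstract graph property preserved by vertex deletion. -/
theorem min_counterexample_no_degree_one_or_three
    (Toroidal : ∀ (W : Type) [Fintype W] [DecidableEq W], SimpleGraph W → Prop)
    {V : Type} [Fintype V] [DecidableEq V] (G : SimpleGraph V)
    (hG : Toroidal V G)
    (hdel : ∀ (W : Type) [Fintype W] [DecidableEq W] (H : SimpleGraph W) (w : W),
      Toroidal W H → Toroidal {x : W // x ≠ w} (H.induce {x : W | x ≠ w}))
    (hno : ¬ G.HasNice)
    (hmin : ∀ (W : Type) [Fintype W] [DecidableEq W] (H : SimpleGraph W),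
      Toroidal W H → Fintype.card W < Fintype.card V → H.HasNice) :
    ∀ v : V, G.degree v ≠ 1 ∧ G.degree v ≠ 3 := by
  intro v
  have hsmall : ¬ (Odd (G.degree v) ∧ G.degree v ≤ 3) := fun ⟨hodd, hle⟩ =>
    hno <| G.hasNice_of_hasNice_induce_ne hodd hle <| by
      convert hmin {x // x ≠ v} _ (hdel V G v hG)
        (Fintype.card_subtype_lt (x := v) (not_not.2 rfl))
  constructor <;> rintro h <;> exact hsmall ⟨by rw [h]; decide, by omega⟩
end

section
/- Let G be a vertex-minimal toroidal graph admitting no proper odd colouring with at most 9 colours. Then G has minimum degree at least 5. -/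
open scoped Classical
open Finset

theorem Finset.card_filter_update {V α : Type} {s : Finset V} {v : V} (hv : v ∈ s) (c : V → α)
    (b a : α) :
    #{y ∈ s | Function.update c v b y = a}
      = #{y ∈ s.erase v | c y = a} + if b = a then 1 else 0 := by
  conv_lhs => rw [← insert_erase hv]
  rw [filter_insert, Function.update_self,
    filter_congr fun y hy => by rw [Function.update_of_ne (ne_of_mem_erase hy)]]
  split_ifs
  · exact card_insert_of_notMem fun h => (mem_filter.1 h).1 |> notMem_erase v s
  · rfl

namespace SimpleGraph

variable {V α : Type} (G : SimpleGraph V)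

def deleteAndJoin (v w : V) (hvw : G.Adj v w) : SimpleGraph {x // x ≠ v} :=
  fromRel fun x y => G.Adj x.1 y.1 ∨ (x = ⟨w, hvw.ne'⟩ ∧ G.Adj v y.1)

section deleteAndJoin

variable {G} {v w : V} (hvw : G.Adj v w)

theorem deleteAndJoin_adj_of_adj {x y : {x // x ≠ v}} (h : G.Adj x y) :
    (G.deleteAndJoin v w hvw).Adj x y :=
  (fromRel_adj _ _ _).2 ⟨fun hxy => h.ne (congrArg Subtype.val hxy), Or.inl (Or.inl h)⟩

theorem deleteAndJoin_adj_of_adj_of_ne {y : {x // x ≠ v}} (hy : G.Adj v y)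
    (hyw : y ≠ ⟨w, hvw.ne'⟩) : (G.deleteAndJoin v w hvw).Adj ⟨w, hvw.ne'⟩ y :=
  (fromRel_adj _ _ _).2 ⟨hyw.symm, Or.inl (Or.inr ⟨rfl, hy⟩)⟩

theorem deleteAndJoin_adj_iff_of_not_adj {u : {x // x ≠ v}} (hu : ¬ G.Adj u v)
    (y : {x // x ≠ v}) : (G.deleteAndJoin v w hvw).Adj u y ↔ G.Adj u y := by
  refine ⟨fun h => ?_, deleteAndJoin_adj_of_adj hvw⟩
  obtain ⟨-, (h | ⟨rfl, -⟩) | (h | ⟨-, hvu⟩)⟩ := (fromRel_adj _ _ _).1 h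
  · exact h
  · exact absurd hvw.symm hu
  · exact h.symm
  · exact absurd hvu.symm hu

end deleteAndJoin

variable [Fintype V]

theorem isOddAt_congr {c c' : V → α} {u : V} (h : ∀ y ∈ G.neighborFinset u, c y = c' y) :
    G.IsOddAt c u ↔ G.IsOddAt c' u := by
  refine exists_congr fun a => ?_
  rw [filter_congr fun y hy => by rw [h y hy]]

theorem isOddAt_update_iff_of_not_adj {c : V → α} {u v : V} (huv : ¬ G.Adj u v) (b : α) :
    G.IsOddAt (Function.update c v b) u ↔ G.IsOddAt c u :=
  G.isOddAt_congr fun y hy =>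
    Function.update_of_ne (by rintro rfl; exact huv ((G.mem_neighborFinset u y).1 hy)) b c

theorem isOddAt_map_iff {W : Type} [Fintype W] {H : SimpleGraph W} (f : W ↪ V) (c : V → α)
    {u : W} (h : G.neighborFinset (f u) = (H.neighborFinset u).map f) :
    G.IsOddAt c (f u) ↔ H.IsOddAt (c ∘ f) u := by
  simp only [IsOddAt, h, filter_map, card_map]
  rfl

theorem isOddAt_of_adj_of_forall_ne {c : V → α} {v w : V} (hw : G.Adj v w)
    (h : ∀ y, G.Adj v y → y ≠ w → c y ≠ c w) : G.IsOddAt c v := by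
  refine ⟨c w, ?_⟩
  have hsingle : {y ∈ G.neighborFinset v | c y = c w} = {w} := by
    ext y
    simp only [mem_filter, mem_neighborFinset, mem_singleton]
    refine ⟨fun ⟨hy, hcy⟩ => by_contra fun hyw => h y hy hyw hcy, ?_⟩
    rintro rfl
    exact ⟨hw, rfl⟩
  rw [hsingle, card_singleton]
  exact odd_one

variable [Fintype α]

noncomputable def oddColoursOff (c : V → α) (v u : V) : Finset α :=
  {a | Odd #{y ∈ (G.neighborFinset u).erase v | c y = a}}

theorem isOddAt_update_of_oddColoursOff_ne {c : V → α} {u v : V} (huv : G.Adj u v) {b : α}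
    (hb : G.oddColoursOff c v u ≠ {b}) : G.IsOddAt (Function.update c v b) u := by
  have hcount := Finset.card_filter_update ((G.mem_neighborFinset u v).2 huv) c b
  by_cases hbodd : b ∈ G.oddColoursOff c v u
  · obtain ⟨a, ha, hab⟩ : ∃ a ∈ G.oddColoursOff c v u, a ≠ b := by
      by_contra! h
      exact hb (eq_singleton_iff_unique_mem.2 ⟨hbodd, h⟩)
    refine ⟨a, ?_⟩
    rw [hcount, if_neg hab.symm, add_zero]
    simpa [oddColoursOff] using ha
  · refine ⟨b, ?_⟩
    rw [hcount, if_pos rfl]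
    exact (Nat.not_odd_iff_even.1 (by simpa [oddColoursOff] using hbodd)).add_one

/-- If `v` took the only odd colour of a neighbour `u` in `G - v`, no colour would be odd
around `u`. -/
noncomputable def forbiddenColours (c : V → α) (v : V) : Finset α :=
  (G.neighborFinset v).biUnion fun u => {a | c u = a ∨ G.oddColoursOff c v u = {a}}

theorem card_forbiddenColours_le (c : V → α) (v : V) :
    #(G.forbiddenColours c v) ≤ 2 * G.degree v := by
  rw [← card_neighborFinset_eq_degree, mul_comm]
  refine card_biUnion_le_card_mul _ _ 2 fun u _ => ?_
  obtain ⟨a₀, ha₀⟩ : ∃ a₀, ∀ a, G.oddColoursOff c v u = {a} → a = a₀ := by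
    by_cases h : ∃ a₀, G.oddColoursOff c v u = {a₀}
    · obtain ⟨a₀, ha₀⟩ := h
      exact ⟨a₀, fun a ha => singleton_injective (ha.symm.trans ha₀)⟩
    · simp only [not_exists] at h
      exact ⟨c u, fun a ha => absurd ha (h a)⟩
  calc #{a | c u = a ∨ G.oddColoursOff c v u = {a}}
      ≤ #{c u, a₀} := card_le_card fun a ha => by
        rcases (mem_filter.1 ha).2 with rfl | ha
        · exact mem_insert_self _ _
        · exact mem_insert_of_mem (mem_singleton.2 (ha₀ a ha))
    _ ≤ 2 := card_le_two

theorem exists_isProperOdd_update_s6 {c : V → α} {v : V} (hdeg : 2 * G.degree v < Fintype.card α)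
    (hproper : ∀ x y, x ≠ v → y ≠ v → G.Adj x y → c x ≠ c y)
    (hodd : ∀ u, ¬ G.Adj u v → 0 < G.degree u → G.IsOddAt c u) :
    ∃ b, G.IsProperOdd (Function.update c v b) := by
  obtain ⟨b, -, hb⟩ := exists_mem_notMem_of_card_lt_card
    ((G.card_forbiddenColours_le c v).trans_lt hdeg : #(G.forbiddenColours c v) < #univ)
  have hbu : ∀ u, G.Adj v u → c u ≠ b ∧ G.oddColoursOff c v u ≠ {b} := by
    simpa [forbiddenColours, not_or] using hb
  refine ⟨b, fun x y hxy => ?_, fun u hu => ?_⟩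
  · rcases eq_or_ne x v with rfl | hx
    · rw [Function.update_self, Function.update_of_ne hxy.ne']
      exact (hbu y hxy).1.symm
    rcases eq_or_ne y v with rfl | hy
    · rw [Function.update_self, Function.update_of_ne hx]
      exact (hbu x hxy.symm).1
    rw [Function.update_of_ne hx, Function.update_of_ne hy]
    exact hproper x y hx hy hxy
  · by_cases huv : G.Adj u v
    · exact G.isOddAt_update_of_oddColoursOff_ne huv (hbu u huv.symm).2
    · exact (G.isOddAt_update_iff_of_not_adj huv b).2 (hodd u huv hu)

section Reduction

variable [DecidableEq V] {v : V} {H : SimpleGraph {x // x ≠ v}}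

theorem neighborFinset_eq_map_subtype {u : {x // x ≠ v}} (hu : ¬ G.Adj u v)
    (h : ∀ y, H.Adj u y ↔ G.Adj u y) :
    G.neighborFinset u = (H.neighborFinset u).map (Function.Embedding.subtype _) := by
  ext y
  simp only [mem_neighborFinset, mem_map, Function.Embedding.coe_subtype]
  refine ⟨fun hy => ⟨⟨y, ?_⟩, (h _).2 hy, rfl⟩, ?_⟩
  · rintro rfl
    exact hu hy
  · rintro ⟨y, hy, rfl⟩
    exact (h y).1 hy

theorem hasNice_of_hasNice_of_degree_le_four (hdeg : G.degree v ≤ 4)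
    (hle : ∀ x y : {x // x ≠ v}, G.Adj (x : V) y → H.Adj x y)
    (hnbr : ∀ u : {x // x ≠ v}, ¬ G.Adj u v → ∀ y, H.Adj u y ↔ G.Adj u y)
    (hjoin : 0 < G.degree v → ∃ w : {x // x ≠ v}, G.Adj v w ∧
      ∀ y : {x // x ≠ v}, G.Adj v y → y ≠ w → H.Adj w y)
    (hH : H.HasNice) : G.HasNice := by
  obtain ⟨c', hproper, hodd⟩ := hH
  let c : V → Fin 9 := fun x => if h : x = v then 0 else c' ⟨x, h⟩
  have hc : ∀ x : {x // x ≠ v}, c x = c' x := fun x => dif_neg x.2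
  have hcH : ∀ x y, H.Adj x y → c x ≠ c y := fun x y h => by
    rw [hc, hc]
    exact hproper x y h
  have hoddc : ∀ u, ¬ G.Adj u v → 0 < G.degree u → G.IsOddAt c u := by
    intro u hu hdegu
    rcases eq_or_ne u v with rfl | huv
    · obtain ⟨w, hw, hwy⟩ := hjoin hdegu
      exact G.isOddAt_of_adj_of_forall_ne hw fun y hy hyw =>
        (hcH _ _ (hwy ⟨y, hy.ne'⟩ hy fun h => hyw (congrArg Subtype.val h))).symm
    obtain ⟨u, rfl⟩ : ∃ u' : {x // x ≠ v}, u'.1 = u := ⟨⟨u, huv⟩, rfl⟩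
    have hN := G.neighborFinset_eq_map_subtype hu (hnbr u hu)
    have hdegH : 0 < H.degree u := by
      rwa [← card_neighborFinset_eq_degree, hN, card_map, card_neighborFinset_eq_degree] at hdegu
    have hcomp : c ∘ Function.Embedding.subtype _ = c' := funext hc
    exact (G.isOddAt_map_iff (Function.Embedding.subtype _) c hN).2 (hcomp ▸ hodd u hdegH)
  obtain ⟨b, hb⟩ := G.exists_isProperOdd_update_s6 (by rw [Fintype.card_fin]; omega)
    (fun x y hx hy hxy => hcH ⟨x, hx⟩ ⟨y, hy⟩ (hle _ _ hxy)) hoddc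
  exact ⟨_, hb⟩

end Reduction

end SimpleGraph

theorem min_counterexample_min_degree_ge_five_general
    (Toroidal : ∀ (W : Type) [Fintype W] [DecidableEq W], SimpleGraph W → Prop)
    {V : Type} [Fintype V] [DecidableEq V] (G : SimpleGraph V)
    (hdel : ∀ v : V, Toroidal {x : V // x ≠ v} (G.induce {x : V | x ≠ v}))
    (hmod : ∀ (v w : V) (hvw : G.Adj v w),
      Toroidal {x : V // x ≠ v}
        (SimpleGraph.fromRel fun x y : {x : V // x ≠ v} =>
          G.Adj x.1 y.1 ∨ (x = ⟨w, hvw.ne'⟩ ∧ G.Adj v y.1)))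
    (hno : ¬ G.HasNice)
    (hmin : ∀ (W : Type) [Fintype W] [DecidableEq W] (H : SimpleGraph W),
      Toroidal W H → Fintype.card W < Fintype.card V → H.HasNice) :
    ∀ v : V, 5 ≤ G.degree v := by
  intro v
  by_contra! hdeg
  have hcard : Fintype.card {x : V // x ≠ v} < Fintype.card V :=
    Fintype.card_subtype_lt (not_not.2 rfl)
  apply hno
  rcases (G.degree v).eq_zero_or_pos with hiso | hpos
  · exact G.hasNice_of_hasNice_of_degree_le_four (by omega) (fun _ _ h => h)
      (fun _ _ _ => Iff.rfl) (by omega) (hmin _ _ (hdel v) hcard)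
  · obtain ⟨w, hvw⟩ := (G.degree_pos_iff_exists_adj v).1 hpos
    exact G.hasNice_of_hasNice_of_degree_le_four (by omega)
      (fun _ _ => SimpleGraph.deleteAndJoin_adj_of_adj hvw)
      (fun _ hu => SimpleGraph.deleteAndJoin_adj_iff_of_not_adj hvw hu)
      (fun _ => ⟨_, hvw, fun _ hy => SimpleGraph.deleteAndJoin_adj_of_adj_of_ne hvw hy⟩)
      (hmin _ (G.deleteAndJoin v w hvw) (hmod v w hvw) hcard)

/-- A vertex-minimal toroidal graph with no nice colouring has minimum degree
at least 5. Toroidality is an abstract property preserved by vertex deletion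
and by deleting a vertex `v` and joining a chosen neighbour `w` of `v` to all
other neighbours of `v`. -/
theorem min_counterexample_min_degree_ge_five
    (Toroidal : ∀ (W : Type) [Fintype W] [DecidableEq W], SimpleGraph W → Prop)
    {V : Type} [Fintype V] [DecidableEq V] (G : SimpleGraph V)
    (hG : Toroidal V G)
    (hdel : ∀ v : V, Toroidal {x : V // x ≠ v} (G.induce {x : V | x ≠ v}))
    (hmod : ∀ (v w : V) (hvw : G.Adj v w),
      Toroidal {x : V // x ≠ v}
        (SimpleGraph.fromRel fun x y : {x : V // x ≠ v} =>
          G.Adj x.1 y.1 ∨ (x = ⟨w, hvw.ne'⟩ ∧ G.Adj v y.1)))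
    (hno : ¬ G.HasNice)
    (hmin : ∀ (W : Type) [Fintype W] [DecidableEq W] (H : SimpleGraph W),
      Toroidal W H → Fintype.card W < Fintype.card V → H.HasNice) :
    ∀ v : V, 5 ≤ G.degree v :=
  min_counterexample_min_degree_ge_five_general Toroidal G hdel hmod hno hmin
end

section
/- Let G be a simple graph containing vertices v, v_1, v_2, v_3, v_4, x with v adjacent to v_1, v_2, v_3, v_4; edges v_1v_2, v_2v_3, v_3v_4 present; v_2 and v_3 of degree 6 with common neighbour x ≠ v. Let c be a proper odd colouring of G \ {v} with c(v_1), c(v_2), c(v_3), c(v_4) pairwise distinct. Then there do not exist two distinct colours a, b, both different from c(v_1), c(v_2), c(v_3), c(v_4), such that assigning a to v makes every colour appear an even number of times in N(v_2) and assigning b to v makes every colour appear an even number of times in N(v_3). -/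
open scoped Classical
open Finset

private lemma card3_aux (x y z : ℕ) : ({x, y, z} : Finset ℕ).card ≤ 3 := by
  have h1 := Finset.card_insert_le x ({y, z} : Finset ℕ)
  have h2 := Finset.card_insert_le y ({z} : Finset ℕ)
  have h3 : ({z} : Finset ℕ).card = 1 := Finset.card_singleton z
  omega

private lemma cover_of_even {V : Type} [DecidableEq V] (S : Finset V) (c' : V → ℕ)
    (h6 : S.card = 6)
    (heven : ∀ d : ℕ, Even ((S.filter fun u => c' u = d).card))
    (p q r : V) (hp : p ∈ S) (hq : q ∈ S) (hr : r ∈ S)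
    (hpq : c' p ≠ c' q) (hpr : c' p ≠ c' r) (hqr : c' q ≠ c' r)
    (w : V) (hw : w ∈ S) : c' w = c' p ∨ c' w = c' q ∨ c' w = c' r := by
  classical
  set A := S.filter fun u => c' u = c' p with hA
  set B := S.filter fun u => c' u = c' q with hB
  set C := S.filter fun u => c' u = c' r with hC
  have hA2 : 2 ≤ A.card := by
    obtain ⟨k, hk⟩ := heven (c' p)
    have hk' : A.card = k + k := hk
    have : p ∈ A := by simp only [hA, Finset.mem_filter]; exact ⟨hp, trivial⟩
    have := Finset.card_pos.mpr ⟨p, this⟩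
    omega
  have hB2 : 2 ≤ B.card := by
    obtain ⟨k, hk⟩ := heven (c' q)
    have hk' : B.card = k + k := hk
    have : q ∈ B := by simp only [hB, Finset.mem_filter]; exact ⟨hq, trivial⟩
    have := Finset.card_pos.mpr ⟨q, this⟩
    omega
  have hC2 : 2 ≤ C.card := by
    obtain ⟨k, hk⟩ := heven (c' r)
    have hk' : C.card = k + k := hk
    have : r ∈ C := by simp only [hC, Finset.mem_filter]; exact ⟨hr, trivial⟩
    have := Finset.card_pos.mpr ⟨r, this⟩
    omega
  have hdAB : Disjoint A B := by
    rw [Finset.disjoint_left]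
    intro u hu1 hu2
    simp only [hA, hB, Finset.mem_filter] at hu1 hu2
    exact hpq (hu1.2 ▸ hu2.2 ▸ rfl)
  have hdAC : Disjoint A C := by
    rw [Finset.disjoint_left]
    intro u hu1 hu2
    simp only [hA, hC, Finset.mem_filter] at hu1 hu2
    exact hpr (hu1.2 ▸ hu2.2 ▸ rfl)
  have hdBC : Disjoint B C := by
    rw [Finset.disjoint_left]
    intro u hu1 hu2
    simp only [hB, hC, Finset.mem_filter] at hu1 hu2
    exact hqr (hu1.2 ▸ hu2.2 ▸ rfl)
  have hsub : A ∪ B ∪ C ⊆ S := by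
    intro u hu
    simp only [hA, hB, hC, Finset.mem_union, Finset.mem_filter] at hu
    rcases hu with (h | h) | h <;> exact h.1
  have hcard : (A ∪ B ∪ C).card = A.card + B.card + C.card := by
    rw [Finset.card_union_of_disjoint
        (by simp only [Finset.disjoint_union_left]; exact ⟨hdAC, hdBC⟩),
      Finset.card_union_of_disjoint hdAB]
  have heq : A ∪ B ∪ C = S :=
    Finset.eq_of_subset_of_card_le hsub (by omega)
  have hw' : w ∈ A ∪ B ∪ C := heq ▸ hw
  simp only [hA, hB, hC, Finset.mem_union, Finset.mem_filter] at hw'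
  rcases hw' with (h | h) | h
  · exact Or.inl h.2
  · exact Or.inr (Or.inl h.2)
  · exact Or.inr (Or.inr h.2)

/-- Lemma 2.4 of the paper: with `v₂, v₃` 6-vertices on a path `v₁v₂v₃v₄`
around `v`, sharing a common neighbour `x ≠ v`, and a proper odd colouring `c`
of `G \ {v}` giving `v₁, v₂, v₃, v₄` distinct colours, the vertices `v₂` and
`v₃` cannot forbid two distinct new colours at `v` by oddness. -/
theorem no_two_distinct_forbidden_by_oddness {V : Type} [Fintype V] [DecidableEq V]
    (G : SimpleGraph V) (v v₁ v₂ v₃ v₄ x : V)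
    (ha1 : G.Adj v v₁) (ha2 : G.Adj v v₂) (ha3 : G.Adj v v₃) (ha4 : G.Adj v v₄)
    (he12 : G.Adj v₁ v₂) (he23 : G.Adj v₂ v₃) (he34 : G.Adj v₃ v₄)
    (hd2 : G.degree v₂ = 6) (hd3 : G.degree v₃ = 6)
    (hx2 : G.Adj v₂ x) (hx3 : G.Adj v₃ x) (hxv : x ≠ v)
    (c : V → ℕ)
    (hproper : ∀ u w : V, u ≠ v → w ≠ v → G.Adj u w → c u ≠ c w)
    (hodd : ∀ w : V, w ≠ v → ((G.neighborFinset w).erase v).Nonempty →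
      ∃ a : ℕ, Odd (((G.neighborFinset w).erase v).filter fun u => c u = a).card)
    (hdistinct : ({c v₁, c v₂, c v₃, c v₄} : Finset ℕ).card = 4) :
    ¬ ∃ a b : ℕ, a ≠ b ∧
      a ∉ ({c v₁, c v₂, c v₃, c v₄} : Finset ℕ) ∧
      b ∉ ({c v₁, c v₂, c v₃, c v₄} : Finset ℕ) ∧
      (∀ d : ℕ, Even ((G.neighborFinset v₂).filter
        fun u => Function.update c v a u = d).card) ∧
      (∀ d : ℕ, Even ((G.neighborFinset v₃).filter
        fun u => Function.update c v b u = d).card) := by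
  rintro ⟨a, b, hab, haN, hbN, hEa, hEb⟩
  -- basic non-equalities with v
  have h1v : v₁ ≠ v := fun h => G.irrefl (h ▸ ha1)
  have h2v : v₂ ≠ v := fun h => G.irrefl (h ▸ ha2)
  have h3v : v₃ ≠ v := fun h => G.irrefl (h ▸ ha3)
  have h4v : v₄ ≠ v := fun h => G.irrefl (h ▸ ha4)
  -- a and b differ from the four colours
  simp only [Finset.mem_insert, Finset.mem_singleton, not_or] at haN hbN
  obtain ⟨ha1', ha2', ha3', ha4'⟩ := haN
  obtain ⟨hb1', hb2', hb3', hb4'⟩ := hbN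
  -- pairwise distinctness of the four colours
  have h13 : c v₁ ≠ c v₃ := by
    intro h
    have hle : ({c v₁, c v₂, c v₃, c v₄} : Finset ℕ).card ≤ 3 := by
      rw [h]
      refine le_trans (Finset.card_le_card fun z hz => ?_) (card3_aux (c v₃) (c v₂) (c v₄))
      simp only [Finset.mem_insert, Finset.mem_singleton] at hz ⊢
      tauto
    omega
  have h24 : c v₂ ≠ c v₄ := by
    intro h
    have hle : ({c v₁, c v₂, c v₃, c v₄} : Finset ℕ).card ≤ 3 := by
      rw [h]
      refine le_trans (Finset.card_le_card fun z hz => ?_) (card3_aux (c v₁) (c v₄) (c v₃))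
      simp only [Finset.mem_insert, Finset.mem_singleton] at hz ⊢
      tauto
    omega
  have h14 : c v₁ ≠ c v₄ := by
    intro h
    have hle : ({c v₁, c v₂, c v₃, c v₄} : Finset ℕ).card ≤ 3 := by
      rw [h]
      refine le_trans (Finset.card_le_card fun z hz => ?_) (card3_aux (c v₄) (c v₂) (c v₃))
      simp only [Finset.mem_insert, Finset.mem_singleton] at hz ⊢
      tauto
    omega
  -- set up the two updated colourings
  set c₁ : V → ℕ := Function.update c v a with hc₁
  set c₂ : V → ℕ := Function.update c v b with hc₂
  have hc₁v : c₁ v = a := Function.update_self v a c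
  have hc₂v : c₂ v = b := Function.update_self v b c
  have hc₁u : ∀ u : V, u ≠ v → c₁ u = c u := fun u hu => Function.update_of_ne hu a c
  have hc₂u : ∀ u : V, u ≠ v → c₂ u = c u := fun u hu => Function.update_of_ne hu b c
  -- apply the covering lemma around v₂ with colouring c₁
  have hcard2 : (G.neighborFinset v₂).card = 6 := by
    rw [SimpleGraph.card_neighborFinset_eq_degree]; exact hd2
  have hx2' : c₁ x = c₁ v ∨ c₁ x = c₁ v₁ ∨ c₁ x = c₁ v₃ := by
    refine cover_of_even (G.neighborFinset v₂) c₁ hcard2 hEa v v₁ v₃ ?_ ?_ ?_ ?_ ?_ ?_ x ?_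
    · exact (SimpleGraph.mem_neighborFinset G v₂ v).mpr ha2.symm
    · exact (SimpleGraph.mem_neighborFinset G v₂ v₁).mpr he12.symm
    · exact (SimpleGraph.mem_neighborFinset G v₂ v₃).mpr he23
    · rw [hc₁v, hc₁u v₁ h1v]; exact ha1'
    · rw [hc₁v, hc₁u v₃ h3v]; exact ha3'
    · rw [hc₁u v₁ h1v, hc₁u v₃ h3v]; exact h13
    · exact (SimpleGraph.mem_neighborFinset G v₂ x).mpr hx2
  -- apply the covering lemma around v₃ with colouring c₂
  have hcard3 : (G.neighborFinset v₃).card = 6 := by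
    rw [SimpleGraph.card_neighborFinset_eq_degree]; exact hd3
  have hx3' : c₂ x = c₂ v ∨ c₂ x = c₂ v₂ ∨ c₂ x = c₂ v₄ := by
    refine cover_of_even (G.neighborFinset v₃) c₂ hcard3 hEb v v₂ v₄ ?_ ?_ ?_ ?_ ?_ ?_ x ?_
    · exact (SimpleGraph.mem_neighborFinset G v₃ v).mpr ha3.symm
    · exact (SimpleGraph.mem_neighborFinset G v₃ v₂).mpr he23.symm
    · exact (SimpleGraph.mem_neighborFinset G v₃ v₄).mpr he34
    · rw [hc₂v, hc₂u v₂ h2v]; exact hb2'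
    · rw [hc₂v, hc₂u v₄ h4v]; exact hb4'
    · rw [hc₂u v₂ h2v, hc₂u v₄ h4v]; exact h24
    · exact (SimpleGraph.mem_neighborFinset G v₃ x).mpr hx3
  -- translate back to c
  rw [hc₁v, hc₁u x hxv, hc₁u v₁ h1v, hc₁u v₃ h3v] at hx2'
  rw [hc₂v, hc₂u x hxv, hc₂u v₂ h2v, hc₂u v₄ h4v] at hx3'
  have hx2ne : c x ≠ c v₃ := hproper x v₃ hxv h3v hx3.symm
  have hx3ne : c x ≠ c v₂ := hproper x v₂ hxv h2v hx2.symm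
  rcases hx2' with h | h | h
  · rcases hx3' with h' | h' | h'
    · exact hab (h ▸ h')
    · exact hx3ne h'
    · exact ha4' (h ▸ h')
  · rcases hx3' with h' | h' | h'
    · exact hb1' (h' ▸ h)
    · exact hx3ne h'
    · exact h14 (h ▸ h')
  · exact hx2ne h
end

section
/- Every cycle C_n (n ≥ 3) has a proper 3-colouring such that the colouring fails to be odd at no more than two vertices; i.e., there is a proper colouring with colours {1,2,3} for which at most two vertices v have both neighbours receiving colours making every colour appear an even number of times in N(v). -/
open scoped Classical
open Finset

/-!
Colour vertex `i` of `C_n` by `i mod 3`. Along the path `0, 1, …, n - 1` three consecutive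
vertices then get three distinct colours, so the colouring is proper and odd away from the
closing edge `{n - 1, 0}`. That edge is proper unless `n ≡ 1 (mod 3)`, and then recolouring
vertex `n - 1` with colour `1` repairs it. Only the vertices next to the seam can fail to be
odd: `0` and `n - 1`, resp. `0` and `n - 2` after the recolouring.
-/

namespace SimpleGraph

theorem isOddAt_iff_ne_of_neighborFinset_eq_pair {V α : Type} [Fintype V] {G : SimpleGraph V}
    {c : V → α} {v a b : V} (hab : a ≠ b) (h : G.neighborFinset v = {a, b}) :
    G.IsOddAt c v ↔ c a ≠ c b := by
  rw [IsOddAt, h]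
  constructor
  · rintro ⟨x, hx⟩ hc
    by_cases ha : c a = x
    · rw [filter_true_of_mem (by simp [ha, ← hc]), card_pair hab] at hx
      exact Nat.not_odd_iff_even.mpr even_two hx
    · rw [filter_false_of_mem (by simp [ha, ← hc])] at hx
      exact Nat.not_odd_zero hx
  · intro hc
    exact ⟨c a, by rw [filter_insert, filter_singleton, if_pos rfl, if_neg (Ne.symm hc)]; simp⟩

theorem cycleGraph_isOddAt_iff {α : Type} {n : ℕ} {c : Fin (n + 3) → α} {v : Fin (n + 3)} :
    (cycleGraph (n + 3)).IsOddAt c v ↔ c (v - 1) ≠ c (v + 1) := by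
  refine isOddAt_iff_ne_of_neighborFinset_eq_pair ?_ (by convert cycleGraph_neighborFinset)
  rw [ne_eq, sub_eq_iff_eq_add, add_assoc, left_eq_add]
  simp [Fin.ext_iff, Fin.val_add, Nat.mod_eq_of_lt]

end SimpleGraph

open SimpleGraph

def cycleThreeColouring (n : ℕ) (v : Fin n) : Fin 3 :=
  if v.val + 1 = n ∧ n % 3 = 1 then 1 else ⟨v.val % 3, Nat.mod_lt _ three_pos⟩

theorem val_cycleThreeColouring (n : ℕ) (v : Fin n) :
    (cycleThreeColouring n v).val = if v.val + 1 = n ∧ n % 3 = 1 then 1 else v.val % 3 := by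
  unfold cycleThreeColouring
  split_ifs <;> rfl

theorem cycleThreeColouring_add_one_ne {n : ℕ} (v : Fin (n + 3)) :
    cycleThreeColouring (n + 3) (v + 1) ≠ cycleThreeColouring (n + 3) v := by
  intro h
  have hval := congrArg Fin.val h
  rw [val_cycleThreeColouring, val_cycleThreeColouring, Fin.val_add_one] at hval
  simp only [Fin.ext_iff, Fin.val_last] at hval
  split_ifs at hval <;> omega

theorem cycleThreeColouring_ne_of_adj {n : ℕ} {u v : Fin (n + 3)}
    (h : (cycleGraph (n + 3)).Adj u v) :
    cycleThreeColouring (n + 3) u ≠ cycleThreeColouring (n + 3) v := by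
  rcases cycleGraph_adj.mp h with h | h
  · rw [sub_eq_iff_eq_add'.mp h]
    exact cycleThreeColouring_add_one_ne v
  · rw [sub_eq_iff_eq_add'.mp h]
    exact (cycleThreeColouring_add_one_ne u).symm

theorem val_eq_of_cycleThreeColouring_sub_one_eq_add_one {n : ℕ} {v : Fin (n + 3)}
    (h : cycleThreeColouring (n + 3) (v - 1) = cycleThreeColouring (n + 3) (v + 1)) :
    v.val = 0 ∨ v.val = if n % 3 = 1 then n + 1 else n + 2 := by
  have hval := congrArg Fin.val h
  rw [val_cycleThreeColouring, val_cycleThreeColouring, Fin.coe_sub_one, Fin.val_add_one] at hval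
  simp only [Fin.ext_iff, Fin.val_last, Fin.val_zero] at hval
  have := v.isLt
  split_ifs at hval ⊢ <;> omega

/-- Every cycle `C_n` (`n ≥ 3`) has a proper 3-colouring that fails to be odd
at no more than two vertices. -/
theorem cycle_proper_three_colouring_almost_odd (n : ℕ) (hn : 3 ≤ n) :
    ∃ c : Fin n → Fin 3,
      (∀ u v : Fin n, (SimpleGraph.cycleGraph n).Adj u v → c u ≠ c v) ∧
      (Finset.univ.filter fun v : Fin n =>
        ¬ (SimpleGraph.cycleGraph n).IsOddAt c v).card ≤ 2 := by
  obtain ⟨m, rfl⟩ : ∃ m, n = m + 3 := ⟨n - 3, by omega⟩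
  refine ⟨cycleThreeColouring (m + 3), fun _ _ => cycleThreeColouring_ne_of_adj, ?_⟩
  calc _ ≤ #({0, if m % 3 = 1 then m + 1 else m + 2} : Finset ℕ) := by
        refine card_le_card_of_injOn Fin.val (fun v hv => ?_) Fin.val_injective.injOn
        rw [coe_filter, Set.mem_ofPred_eq, cycleGraph_isOddAt_iff, not_not] at hv
        simpa using val_eq_of_cycleThreeColouring_sub_one_eq_add_one hv.2
    _ ≤ 2 := card_le_two
end
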